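/- For all integers s, m ≥ 0 and 0 ≤ g ≤ s: p(2,s,m,1=,g=,0=,m=) = 1 (the unique such multigraph is a root with s−g self-loops joined by an edge of multiplicity m to a single child carrying g self-loops). Moreover, for every n ≥ 3 and all s ≥ 0: p(n,s,0,1=,0=,0=,0=) = 1 (the unique such multigraph is a root carrying all s self-loops joined by simple edges to n−1 loop-free leaf children). (Corrected form of the paper's Lemma 4(iv).) -/

import Mathlib

/-- Rooted tree-like multigraph (list-based representative): a root carrying a
self-loop count together with a list of children, each child being a pair of an
edge multiplicity (number of multiple edges, i.e. copies beyond the first, of the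
edge joining the root to the child's root) and a rooted tree-like multigraph. -/
inductive PreRTM : Type where
  | node : ℕ → List (ℕ × PreRTM) → PreRTM

namespace PreRTM

/-- self-loop count of the root -/
def loops : PreRTM → ℕ
  | .node l _ => l

/-- the children of the root -/
def children : PreRTM → List (ℕ × PreRTM)
  | .node _ cs => cs

/-- number of vertices -/
def vcount : PreRTM → ℕ
  | .node _ cs => 1 + (cs.attach.map (fun c => vcount c.1.2)).sum
decreasing_by
  rcases c with ⟨⟨e, Q⟩, hc⟩
  have h1 := List.sizeOf_lt_of_mem hc
  simp only [Prod.mk.sizeOf_spec, PreRTM.node.sizeOf_spec] at *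
  omega

/-- total number of self-loops -/
def scount : PreRTM → ℕ
  | .node l cs => l + (cs.attach.map (fun c => scount c.1.2)).sum
decreasing_by
  rcases c with ⟨⟨e, Q⟩, hc⟩
  have h1 := List.sizeOf_lt_of_mem hc
  simp only [Prod.mk.sizeOf_spec, PreRTM.node.sizeOf_spec] at *
  omega

/-- total number of multiple edges -/
def ecount : PreRTM → ℕ
  | .node _ cs => (cs.attach.map (fun c => c.1.1 + ecount c.1.2)).sum
decreasing_by
  rcases c with ⟨⟨e, Q⟩, hc⟩
  have h1 := List.sizeOf_lt_of_mem hc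
  simp only [Prod.mk.sizeOf_spec, PreRTM.node.sizeOf_spec] at *
  omega

/-- Max_v: maximum number of vertices in a descendant subtree of the root (0 if none) -/
def maxV (P : PreRTM) : ℕ :=
  (P.children.map (fun c => c.2.vcount)).foldr max 0

/-- Max_s: maximum number of self-loops among descendant subtrees with `vcount = maxV` -/
def maxS (P : PreRTM) : ℕ :=
  (((P.children.filter (fun c => c.2.vcount == P.maxV)).map (fun c => c.2.scount)).foldr max 0)

/-- Max_m: maximum number of multiple edges among descendant subtrees with `vcount = maxV` -/
def maxM (P : PreRTM) : ℕ :=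
  (((P.children.filter (fun c => c.2.vcount == P.maxV)).map (fun c => c.2.ecount)).foldr max 0)

/-- Max_l: maximum multiplicity of the root edge among descendant subtrees with
`vcount = maxV` and `ecount = maxM` -/
def maxL (P : PreRTM) : ℕ :=
  (((P.children.filter (fun c => c.2.vcount == P.maxV && c.2.ecount == P.maxM)).map
      (fun c => c.1)).foldr max 0)

mutual
  /-- root-preserving isomorphism: equal root self-loop counts and equal multisets of children -/
  inductive REquiv : PreRTM → PreRTM → Prop where
    | node (l : ℕ) {cs cs' : List (ℕ × PreRTM)} :
        LEquiv cs cs' → REquiv (.node l cs) (.node l cs')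
  /-- lists of children agree as multisets, up to `REquiv` of the subtrees -/
  inductive LEquiv : List (ℕ × PreRTM) → List (ℕ × PreRTM) → Prop where
    | nil : LEquiv [] []
    | cons {e : ℕ} {P Q : PreRTM} {l₁ l₂ : List (ℕ × PreRTM)} :
        REquiv P Q → LEquiv l₁ l₂ → LEquiv ((e, P) :: l₁) ((e, Q) :: l₂)
    | swap (a b : ℕ × PreRTM) (l : List (ℕ × PreRTM)) : LEquiv (a :: b :: l) (b :: a :: l)
    | trans {l₁ l₂ l₃ : List (ℕ × PreRTM)} : LEquiv l₁ l₂ → LEquiv l₂ l₃ → LEquiv l₁ l₃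
end

end PreRTM

/-- Rooted tree-like multigraphs, up to root-preserving isomorphism. -/
def RTM : Type := Quot PreRTM.REquiv

/-- the isomorphism class of a representative -/
def cls (P : PreRTM) : RTM := Quot.mk PreRTM.REquiv P

namespace PreRTM

/-- `P` has `n` vertices, `s` self-loops and `m` multiple edges -/
def memP (n s m : ℤ) (P : PreRTM) : Prop :=
  (P.vcount : ℤ) = n ∧ (P.scount : ℤ) = s ∧ (P.ecount : ℤ) = m

/-- membership in 𝒫(n,s,m,f≤,g≤,h≤,k≤) -/
def memLLLL (n s m f g h k : ℤ) (P : PreRTM) : Prop :=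
  memP n s m P ∧ (P.maxV : ℤ) ≤ f ∧ (P.maxS : ℤ) ≤ g ∧ (P.maxM : ℤ) ≤ h ∧ (P.maxL : ℤ) ≤ k

/-- membership in 𝒫(n,s,m,f=,g≤,h≤,k≤) -/
def memELLL (n s m f g h k : ℤ) (P : PreRTM) : Prop :=
  memLLLL n s m f g h k P ∧ (P.maxV : ℤ) = f

/-- membership in 𝒫(n,s,m,f=,g=,h≤,k≤) -/
def memEELL (n s m f g h k : ℤ) (P : PreRTM) : Prop :=
  memELLL n s m f g h k P ∧ (P.maxS : ℤ) = g

/-- membership in 𝒫(n,s,m,f=,g=,h=,k≤) -/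
def memEEEL (n s m f g h k : ℤ) (P : PreRTM) : Prop :=
  memEELL n s m f g h k P ∧ (P.maxM : ℤ) = h

/-- membership in 𝒫(n,s,m,f=,g=,h=,k=) -/
def memEEEE (n s m f g h k : ℤ) (P : PreRTM) : Prop :=
  memEEEL n s m f g h k P ∧ (P.maxL : ℤ) = k

end PreRTM

/-- the family 𝒫(n,s,m,f≤,g≤,h≤,k≤) of isomorphism classes -/
def famLLLL (n s m f g h k : ℤ) : Set RTM := cls '' {P | P.memLLLL n s m f g h k}
/-- the family 𝒫(n,s,m,f=,g≤,h≤,k≤) of isomorphism classes -/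
def famELLL (n s m f g h k : ℤ) : Set RTM := cls '' {P | P.memELLL n s m f g h k}
/-- the family 𝒫(n,s,m,f=,g=,h≤,k≤) of isomorphism classes -/
def famEELL (n s m f g h k : ℤ) : Set RTM := cls '' {P | P.memEELL n s m f g h k}
/-- the family 𝒫(n,s,m,f=,g=,h=,k≤) of isomorphism classes -/
def famEEEL (n s m f g h k : ℤ) : Set RTM := cls '' {P | P.memEEEL n s m f g h k}
/-- the family 𝒫(n,s,m,f=,g=,h=,k=) of isomorphism classes -/
def famEEEE (n s m f g h k : ℤ) : Set RTM := cls '' {P | P.memEEEE n s m f g h k}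

/-- p(n,s,m,f≤,g≤,h≤,k≤) -/
noncomputable def pLLLL (n s m f g h k : ℤ) : ℕ := (famLLLL n s m f g h k).ncard
/-- p(n,s,m,f=,g≤,h≤,k≤) -/
noncomputable def pELLL (n s m f g h k : ℤ) : ℕ := (famELLL n s m f g h k).ncard
/-- p(n,s,m,f=,g=,h≤,k≤) -/
noncomputable def pEELL (n s m f g h k : ℤ) : ℕ := (famEELL n s m f g h k).ncard
/-- p(n,s,m,f=,g=,h=,k≤) -/
noncomputable def pEEEL (n s m f g h k : ℤ) : ℕ := (famEEEL n s m f g h k).ncard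
/-- p(n,s,m,f=,g=,h=,k=) -/
noncomputable def pEEEE (n s m f g h k : ℤ) : ℕ := (famEEEE n s m f g h k).ncard

/-- w(f,g,h;z) = C(p(f,g,h,(f−1)≤,g≤,h≤,h≤) + z − 1, z) -/
noncomputable def w (f g h : ℤ) (z : ℕ) : ℕ :=
  (pLLLL f g h (f - 1) g h h + z - 1).choose z

/-- the index set Y : integers y with 1 ≤ y ≤ ⌊(n−1)/f⌋, additionally y ≤ ⌊s/g⌋ when g ≥ 1
and y ≤ ⌊m/(h+k)⌋ when h+k ≥ 1 -/
noncomputable def Yset (n s m f g h k : ℤ) : Finset ℤ :=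
  (Finset.Icc 1 ((n - 1) / f)).filter
    (fun y => (1 ≤ g → y ≤ s / g) ∧ (1 ≤ h + k → y ≤ m / (h + k)))

/-! Both families consist of stars, roots all of whose children are leaves. Two vertices force a
single leaf, and then the self-loop count of the leaf is `Max_s`, the edge multiplicity is the
total `e`, and the root takes the remaining self-loops. In the second family `Max_v = 1` forces
every child to be a leaf, `Max_s = 0` makes the leaves loop-free, `e = 0` makes the edges simple,
and the vertex count fixes the number of leaves. Hence each family is the class of one
representative. -/

lemma List.foldr_max_replicate {k : ℕ} (hk : k ≠ 0) (y : ℕ) :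
    (List.replicate k y).foldr max 0 = y := by
  obtain ⟨j, rfl⟩ := Nat.exists_eq_add_one_of_ne_zero hk
  induction j with
  | zero => simp
  | succ j ih => rw [List.replicate_succ, List.foldr_cons, ih (by omega), max_self]

namespace PreRTM

@[simp]
lemma vcount_node (l : ℕ) (cs : List (ℕ × PreRTM)) :
    (node l cs).vcount = 1 + (cs.map fun c => c.2.vcount).sum := by
  rw [vcount, List.attach_map_val (l := cs) (f := fun c => c.2.vcount)]

@[simp]
lemma scount_node (l : ℕ) (cs : List (ℕ × PreRTM)) :
    (node l cs).scount = l + (cs.map fun c => c.2.scount).sum := by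
  rw [scount, List.attach_map_val (l := cs) (f := fun c => c.2.scount)]

@[simp]
lemma ecount_node (l : ℕ) (cs : List (ℕ × PreRTM)) :
    (node l cs).ecount = (cs.map fun c => c.1 + c.2.ecount).sum := by
  rw [ecount, List.attach_map_val (l := cs) (f := fun c => c.1 + c.2.ecount)]

lemma one_le_vcount (P : PreRTM) : 1 ≤ P.vcount := by
  obtain ⟨l, cs⟩ := P
  simp

lemma eq_node_nil_of_vcount_eq_one {Q : PreRTM} (h : Q.vcount = 1) : Q = node Q.loops [] := by
  obtain ⟨l, _ | ⟨c, cs⟩⟩ := Q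
  · rfl
  · have := one_le_vcount c.2
    simp only [vcount_node, List.map_cons, List.sum_cons] at h
    omega

lemma vcount_le_maxV {P : PreRTM} {c : ℕ × PreRTM} (hc : c ∈ P.children) :
    c.2.vcount ≤ P.maxV :=
  List.le_max_of_le' 0 (List.mem_map_of_mem hc) le_rfl

lemma scount_le_maxS {P : PreRTM} {c : ℕ × PreRTM} (hc : c ∈ P.children)
    (hv : c.2.vcount = P.maxV) : c.2.scount ≤ P.maxS :=
  List.le_max_of_le' 0 (List.mem_map_of_mem (List.mem_filter.mpr ⟨hc, by simpa using hv⟩)) le_rfl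

lemma fst_le_ecount {P : PreRTM} {c : ℕ × PreRTM} (hc : c ∈ P.children) : c.1 ≤ P.ecount := by
  obtain ⟨l, cs⟩ := P
  rw [ecount_node]
  exact (Nat.le_add_right _ _).trans (List.le_sum_of_mem (List.mem_map_of_mem hc))

def star (a k e c : ℕ) : PreRTM := node a (List.replicate k (e, node c []))

section star

variable {a k e c : ℕ}

@[simp] lemma vcount_star : (star a k e c).vcount = 1 + k := by simp [star]

@[simp] lemma scount_star : (star a k e c).scount = a + k * c := by simp [star]

@[simp] lemma ecount_star : (star a k e c).ecount = k * e := by simp [star]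

lemma maxV_star (hk : k ≠ 0) : (star a k e c).maxV = 1 := by
  simp [maxV, star, children, List.foldr_max_replicate hk]

lemma maxS_star (hk : k ≠ 0) : (star a k e c).maxS = c := by
  rw [maxS, maxV_star hk]
  simp [star, children, List.foldr_max_replicate hk]

lemma maxM_star (hk : k ≠ 0) : (star a k e c).maxM = 0 := by
  rw [maxM, maxV_star hk]
  simp [star, children, List.foldr_max_replicate hk]

lemma maxL_star (hk : k ≠ 0) : (star a k e c).maxL = e := by
  rw [maxL, maxV_star hk, maxM_star hk]
  simp [star, children, List.foldr_max_replicate hk]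

lemma memEEEE_star (hk : k ≠ 0) :
    (star a k e c).memEEEE (1 + k) (a + k * c) (k * e) 1 c 0 e := by
  simp [memEEEE, memEEEL, memEELL, memELLL, memLLLL, memP, maxV_star hk, maxS_star hk,
    maxM_star hk, maxL_star hk]

end star

lemma exists_eq_star_of_vcount_eq_two {P : PreRTM} (h : P.vcount = 2) :
    ∃ a e c, P = star a 1 e c := by
  obtain ⟨l, _ | ⟨⟨e, Q⟩, _ | ⟨d, cs⟩⟩⟩ := P
  · simp at h
  · have hQ : Q.vcount = 1 := by
      simp only [vcount_node, List.map_cons, List.map_nil, List.sum_cons, List.sum_nil,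
        add_zero] at h
      omega
    exact ⟨l, e, Q.loops, by rw [eq_node_nil_of_vcount_eq_one hQ]; rfl⟩
  · have := one_le_vcount Q
    have := one_le_vcount d.2
    simp only [vcount_node, List.map_cons, List.sum_cons] at h
    omega

lemma eq_star_of_maxV_eq_one {P : PreRTM} (hV : P.maxV = 1) (hS : P.maxS = 0)
    (he : P.ecount = 0) : P = star P.loops P.children.length 0 0 := by
  have hchild : ∀ c ∈ P.children, c = (0, node 0 []) := by
    rintro ⟨e, Q⟩ hc
    have hv : Q.vcount = 1 := le_antisymm (hV ▸ vcount_le_maxV hc) (one_le_vcount Q)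
    have hs : Q.scount = 0 := Nat.le_zero.mp (hS ▸ scount_le_maxS hc (hv.trans hV.symm))
    have he : e = 0 := Nat.le_zero.mp (he ▸ fst_le_ecount hc)
    rw [eq_node_nil_of_vcount_eq_one hv] at hs ⊢
    simp_all
  obtain ⟨l, cs⟩ := P
  exact congrArg (node l) (List.eq_replicate_iff.mpr ⟨rfl, hchild⟩)

lemma memEEEE_two_iff {s m g : ℕ} (hgs : g ≤ s) {P : PreRTM} :
    P.memEEEE 2 s m 1 g 0 m ↔ P = star (s - g) 1 m g := by
  constructor
  · rintro ⟨⟨⟨⟨⟨⟨hv, hs, he⟩, -⟩, -⟩, hS⟩, -⟩, -⟩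
    obtain ⟨a, e, c, rfl⟩ := exists_eq_star_of_vcount_eq_two (by exact_mod_cast hv)
    rw [maxS_star one_ne_zero] at hS
    simp only [scount_star, one_mul, Nat.cast_add, ecount_star, Nat.cast_inj] at hs he hS
    subst he hS
    congr 1
    omega
  · rintro rfl
    convert memEEEE_star (a := s - g) (e := m) (c := g) one_ne_zero using 2 <;> push_cast <;> omega

lemma memEEEE_iff_eq_star_leaves {k s : ℕ} (hk : k ≠ 0) {P : PreRTM} :
    P.memEEEE (1 + k) s 0 1 0 0 0 ↔ P = star s k 0 0 := by
  constructor
  · rintro ⟨⟨⟨⟨⟨⟨hv, hs, he⟩, -⟩, hV⟩, hS⟩, -⟩, -⟩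
    rw [eq_star_of_maxV_eq_one (P := P) (by exact_mod_cast hV) (by exact_mod_cast hS)
      (by exact_mod_cast he)] at hv hs ⊢
    simp only [vcount_star, Nat.cast_add, Nat.cast_one, add_right_inj, Nat.cast_inj, scount_star,
      mul_zero, add_zero] at hv hs
    rw [hv, hs]
  · rintro rfl
    simpa using memEEEE_star (a := s) (e := 0) (c := 0) hk

end PreRTM

lemma ncard_image_cls_eq_one {p : PreRTM → Prop} {P₀ : PreRTM} (h : ∀ P, p P ↔ P = P₀) :
    (cls '' {P | p P}).ncard = 1 := by
  rw [show {P | p P} = {P₀} from Set.ext h, Set.image_singleton, Set.ncard_singleton]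

/-- Corrected form of the paper's Lemma 4(iv). -/
theorem lemma4_iv :
    (∀ s m g : ℤ, 0 ≤ s → 0 ≤ m → 0 ≤ g → g ≤ s → pEEEE 2 s m 1 g 0 m = 1) ∧
    (∀ n s : ℤ, 3 ≤ n → 0 ≤ s → pEEEE n s 0 1 0 0 0 = 1) := by
  constructor
  · intro s m g hs hm hg hgs
    lift s to ℕ using hs
    lift m to ℕ using hm
    lift g to ℕ using hg
    exact ncard_image_cls_eq_one fun P => PreRTM.memEEEE_two_iff (by exact_mod_cast hgs)
  · intro n s hn hs
    lift s to ℕ using hs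
    obtain ⟨k, rfl⟩ : ∃ k : ℕ, n = 1 + k := ⟨(n - 1).toNat, by omega⟩
    exact ncard_image_cls_eq_one fun P => PreRTM.memEEEE_iff_eq_star_leaves (by omega)
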